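/- arXiv:1208.5424 — 6 statements merged into one kernel-verified Lean document; each statement's English description precedes it below -/
import Mathlib

section
/- For every infinite cardinal κ there exists a symmetric function g : κ⁺ × κ⁺ → κ such that for every subset U ⊆ κ⁺ of cardinality κ⁺, the range of the restriction of g to U × U is unbounded in κ, i.e., sup(range(g ↾ U × U)) = κ. -/
open Cardinal

universe u

open Classical in
noncomputable def auxF (κ : Cardinal.{u}) (β α : Ordinal.{u}) : Ordinal.{u} :=
  if h : Nonempty ((Set.Iio β) ≃ (Set.Iio κ.ord)) ∧ α < β then
    ((Classical.choice h.1) ⟨α, h.2⟩ : (Set.Iio κ.ord)) else 0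

lemma auxF_eq (κ : Cardinal.{u}) {β α : Ordinal.{u}}
    (hne : Nonempty ((Set.Iio β) ≃ (Set.Iio κ.ord))) (hαβ : α < β) :
    auxF κ β α = ((Classical.choice hne) ⟨α, hαβ⟩ : (Set.Iio κ.ord)) := by
  unfold auxF
  rw [dif_pos (⟨hne, hαβ⟩ : Nonempty ((Set.Iio β) ≃ (Set.Iio κ.ord)) ∧ α < β)]

lemma auxF_lt (κ : Cardinal.{u}) (hκ : ℵ₀ ≤ κ) (β α : Ordinal.{u}) : auxF κ β α < κ.ord := by
  by_cases h : Nonempty ((Set.Iio β) ≃ (Set.Iio κ.ord)) ∧ α < β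
  · rw [auxF_eq κ h.1 h.2]
    exact ((Classical.choice h.1) ⟨α, h.2⟩).2
  · unfold auxF
    rw [dif_neg h]
    exact (Cardinal.isSuccLimit_ord hκ).pos

/-- For every infinite cardinal `κ` there is a symmetric function
`g : κ⁺ × κ⁺ → κ` such that on every `U ⊆ κ⁺` of cardinality `κ⁺`, the range of
`g` restricted to `U × U` is unbounded in `κ`, i.e. its supremum is `κ`. -/
theorem exists_symmetric_unbounded_coloring (κ : Cardinal.{u}) (hκ : ℵ₀ ≤ κ) :
    ∃ g : Ordinal.{u} → Ordinal.{u} → Ordinal.{u},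
      (∀ α β, g α β = g β α) ∧
      (∀ α β, α < (Order.succ κ).ord → β < (Order.succ κ).ord → g α β < κ.ord) ∧
      (∀ U : Set Ordinal.{u}, U ⊆ Set.Iio (Order.succ κ).ord →
        #↥U = Cardinal.lift.{u + 1} (Order.succ κ) →
        sSup {x : Ordinal.{u} | ∃ α ∈ U, ∃ β ∈ U, g α β = x} = κ.ord) := by
  classical
  refine ⟨fun α β => if α < β then auxF κ β α else auxF κ α β, ?_, ?_, ?_⟩
  · intro α β
    dsimp only
    rcases lt_trichotomy α β with h | h | h
    · rw [if_pos h, if_neg (asymm h)]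
    · subst h; rfl
    · rw [if_neg (asymm h), if_pos h]
  · intro α β _ _
    dsimp only
    split <;> exact auxF_lt κ hκ _ _
  · intro U hUsub hU
    -- a subset W of U of size κ
    obtain ⟨W, hWU, hW⟩ : ∃ W, W ⊆ U ∧ #W = Cardinal.lift.{u+1} κ := by
      rw [← Cardinal.le_mk_iff_exists_subset, hU]
      exact Cardinal.lift_le.2 (Order.lt_succ κ).le
    -- an enumeration of W from a small type
    obtain ⟨e⟩ : Nonempty (κ.out ≃ ↥W) := by
      rw [← Cardinal.lift_mk_eq']
      simp [hW, Cardinal.mk_out, Cardinal.lift_id']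
    set f : κ.out → Ordinal.{u} := fun t => ((e t : ↥W) : Ordinal) with hf
    have hδ : iSup f < (Order.succ κ).ord := by
      apply Ordinal.iSup_lt_ord
      · rw [Cardinal.mk_out, (Cardinal.isRegular_succ hκ).cof_eq]
        exact Order.lt_succ κ
      · intro t; exact hUsub (hWU (e t).2)
    set δ := iSup f with hδdef
    have hWδ : ∀ w ∈ W, w ≤ δ := by
      intro w hw
      have h1 : f (e.symm ⟨w, hw⟩) = w := by simp [hf]
      rw [← h1]
      exact le_ciSup (Ordinal.bddAbove_range f) _
    -- pick β ∈ U above δ and κ.ord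
    obtain ⟨β, hβU, hδβ, hκβ⟩ : ∃ β ∈ U, δ < β ∧ κ.ord ≤ β := by
      by_contra hcon
      push_neg at hcon
      have hsub : U ⊆ Set.Iio (max (δ + 1) κ.ord) := by
        intro x hx
        rcases le_or_gt x δ with h | h
        · have h1 : δ < δ + 1 := by
            rw [Ordinal.add_one_eq_succ]
            exact Order.lt_succ δ
          exact lt_of_le_of_lt h (lt_of_lt_of_le h1 (le_max_left (δ + 1) κ.ord))
        · exact lt_of_lt_of_le (hcon x hx h) (le_max_right _ _)
      have h1 : #U ≤ #(Set.Iio (max (δ + 1) κ.ord)) := Cardinal.mk_le_mk_of_subset hsub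
      rw [hU, Ordinal.mk_Iio_ordinal] at h1
      have hmax : max (δ + 1) κ.ord < (Order.succ κ).ord := by
        apply max_lt
        · rw [Ordinal.add_one_eq_succ]
          exact (Cardinal.isSuccLimit_ord (hκ.trans (Order.lt_succ κ).le)).succ_lt hδ
        · exact Cardinal.ord_lt_ord.2 (Order.lt_succ κ)
      have h2 : (max (δ + 1) κ.ord).card ≤ κ := Order.lt_succ_iff.1 (Cardinal.lt_ord.1 hmax)
      have h3 := h1.trans (Cardinal.lift_le.2 h2)
      exact absurd h3 (not_le.2 (Cardinal.lift_lt.2 (Order.lt_succ κ)))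
    -- β has an equiv to κ.ord
    have hβcard : β.card = κ :=
      le_antisymm (Order.lt_succ_iff.1 (Cardinal.lt_ord.1 (hUsub hβU))) (Cardinal.ord_le.1 hκβ)
    have hne : Nonempty ((Set.Iio β) ≃ (Set.Iio κ.ord)) := by
      apply Cardinal.eq.1
      rw [Ordinal.mk_Iio_ordinal, Ordinal.mk_Iio_ordinal, hβcard, Cardinal.card_ord]
    have hWβ : W ⊆ U ∩ Set.Iio β := fun w hw => ⟨hWU hw, lt_of_le_of_lt (hWδ w hw) hδβ⟩
    have hbig : Cardinal.lift.{u+1} κ ≤ #(↥(U ∩ Set.Iio β)) :=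
      hW ▸ Cardinal.mk_le_mk_of_subset hWβ
    -- compute the sup
    apply le_antisymm
    · apply csSup_le'
      rintro x ⟨α, hα, β', hβ', rfl⟩
      dsimp only
      split <;> exact (auxF_lt κ hκ _ _).le
    · apply le_of_forall_lt
      intro γ hγ
      have hγ1 : Order.succ γ < κ.ord := (Cardinal.isSuccLimit_ord hκ).succ_lt hγ
      obtain ⟨α, hαU, hαβ, hγα⟩ : ∃ α ∈ U, α < β ∧ γ < auxF κ β α := by
        by_contra hc
        push_neg at hc
        have inj : Function.Injective
            (fun a : ↥(U ∩ Set.Iio β) =>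
              (⟨auxF κ β a, lt_of_le_of_lt (hc a a.2.1 a.2.2) (Order.lt_succ γ)⟩ :
                ↥(Set.Iio (Order.succ γ)))) := by
          intro a a' h
          have h1 : auxF κ β a = auxF κ β a' := congrArg Subtype.val h
          rw [auxF_eq κ hne a.2.2, auxF_eq κ hne a'.2.2] at h1
          have h2 := (Classical.choice hne).injective (Subtype.ext h1)
          have h3 : (a : Ordinal) = (a' : Ordinal) := by simpa using h2
          exact Subtype.ext h3
        have h3 : #(↥(U ∩ Set.Iio β)) ≤ #(↥(Set.Iio (Order.succ γ))) :=
          Cardinal.mk_le_of_injective inj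
        rw [Ordinal.mk_Iio_ordinal] at h3
        have h4 : (Order.succ γ).card < κ := Cardinal.lt_ord.1 hγ1
        exact absurd (hbig.trans h3) (not_le.2 (Cardinal.lift_lt.2 h4))
      refine lt_of_lt_of_le hγα (le_csSup ?_ ?_)
      · refine ⟨κ.ord, ?_⟩
        rintro x ⟨α', hα', β', hβ', rfl⟩
        dsimp only
        split <;> exact (auxF_lt κ hκ _ _).le
      · exact ⟨α, hαU, β, hβU, by simp only [if_pos hαβ]⟩
end

section
/- Let D be an ultrafilter on a set I, M an L-structure for a first-order language L, φ(x; y) an L-formula, and ⟨a_i : i < μ⟩ elements of the ultrapower N = M^I/D with representatives a_i ∈ M^I. Suppose there is a monotone map d : [μ]^{<ℵ₀} → D such that (i) d(u) ⊆ {t ∈ I : M ⊨ ∃x ⋀_{i∈u} φ(x; a_i(t))} for every finite u ⊆ μ, (ii) d(u ∪ v) = d(u) ∩ d(v) for all finite u, v ⊆ μ (d is multiplicative), and (iii) for each t ∈ I the set {i < μ : t ∈ d({i})} is finite. Then the type {φ(x; a_i/D) : i < μ} is realized in N, i.e., there is c ∈ N with N ⊨ φ(c; a_i/D) for all i < μ.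 -/
open FirstOrder

/-- If a type `p = {φ(x; a_i/D) : i < μ}` in an ultrapower `M^I/D` has a monotone
multiplicative distribution `d` into `D` refining the Łoś map and such that each
index `t ∈ I` is assigned only finitely many formulas, then `p` is realized in
`M^I/D` (the conclusion `N ⊨ φ(c; a_i/D)` is stated, via Łoś's theorem, as
`{t : M ⊨ φ(c(t); a_i(t))} ∈ D`). -/
theorem realize_type_of_multiplicative_distribution
    {L : FirstOrder.Language} {M : Type*} [L.Structure M]
    {I : Type*} (D : Ultrafilter I) {m : ℕ} (φ : L.Formula (Fin (m + 1)))
    {μ : Type*} (a : μ → I → Fin m → M) (d : Set μ → Set I)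
    (hmem : ∀ u : Set μ, u.Finite → d u ∈ D)
    (hmono : ∀ u v : Set μ, u ⊆ v → d v ⊆ d u)
    (hmult : ∀ u v : Set μ, u.Finite → v.Finite → d (u ∪ v) = d u ∩ d v)
    (hlos : ∀ u : Set μ, u.Finite →
      d u ⊆ {t : I | ∃ x : M, ∀ i ∈ u, φ.Realize (Fin.cons x (a i t))})
    (hreg : ∀ t : I, {i : μ | t ∈ d {i}}.Finite) :
    ∃ c : I → M, ∀ i : μ, {t : I | φ.Realize (Fin.cons (c t) (a i t))} ∈ D := by
  classical
  have hM : Nonempty M := by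
    have h0 : d ∅ ∈ D := hmem ∅ Set.finite_empty
    obtain ⟨t, ht⟩ := Ultrafilter.nonempty_of_mem h0
    obtain ⟨x, -⟩ := hlos ∅ Set.finite_empty ht
    exact ⟨x⟩
  have key : ∀ u : Set μ, u.Finite → ∀ t : I, t ∈ d ∅ → (∀ i ∈ u, t ∈ d {i}) → t ∈ d u := by
    intro u hu
    refine Set.Finite.induction_on u hu (fun t h _ => h) ?_
    intro i s hi hs ih t h hall
    have heq : d (insert i s) = d {i} ∩ d s := by
      rw [Set.insert_eq]
      exact hmult _ _ (Set.finite_singleton _) hs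
    rw [heq]
    exact ⟨hall i (Set.mem_insert _ _),
      ih t h (fun j hj => hall j (Set.mem_insert_of_mem _ hj))⟩
  set u : I → Set μ := fun t => {i | t ∈ d {i}} with hu
  have hc : ∀ t : I, ∃ x : M, ∀ i ∈ u t, φ.Realize (Fin.cons x (a i t)) := by
    intro t
    by_cases h : t ∈ d (u t)
    · exact hlos _ (hreg t) h
    · refine ⟨Classical.arbitrary M, fun i hi => absurd ?_ h⟩
      exact key _ (hreg t) t (hmono ∅ {i} (Set.empty_subset _) hi) (fun j hj => hj)
  choose c hcspec using hc
  refine ⟨c, fun i => ?_⟩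
  refine Filter.mem_of_superset (hmem {i} (Set.finite_singleton _)) (fun t ht => ?_)
  exact hcspec t i ht
end

section
/- Let D be a λ-regular ultrafilter on a set I with |I| = λ. Then there is a sequence ⟨n_t : t ∈ I⟩ of natural numbers such that for all regular cardinals κ₁, κ₂ with κ₁ + κ₂ ≤ λ: the linear order (ω, <)^I/D has a (κ₁, κ₂)-cut if and only if the ultraproduct ∏_{t∈I} ({0, 1, …, n_t − 1}, <)/D has a (κ₁, κ₂)-cut. -/
open Cardinal Filter

universe u v

/-- A filter `D` on `I` is `λ`-regular: there is a family `{X_α : α < λ} ⊆ D`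
such that every `t ∈ I` belongs to only finitely many `X_α`. -/
def IsRegularFilter {I : Type v} (D : Filter I) (lam : Cardinal.{u}) : Prop :=
  ∃ X : ↥(Set.Iio lam.ord) → Set I,
    (∀ α, X α ∈ D) ∧ ∀ t : I, {α | t ∈ X α}.Finite

/-- A linear order `X` has a `(κ₁, κ₂)`-cut: a strictly increasing `κ₁`-sequence
and a strictly decreasing `κ₂`-sequence, the former below the latter, with no
element of `X` strictly in between. -/
def HasCut (X : Type v) [LinearOrder X] (κ₁ κ₂ : Cardinal.{u}) : Prop :=
  ∃ a b : Ordinal.{u} → X,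
    (∀ i j, i < j → j < κ₁.ord → a i < a j) ∧
    (∀ i j, i < j → j < κ₂.ord → b j < b i) ∧
    (∀ i j, i < κ₁.ord → j < κ₂.ord → a i < b j) ∧
    ¬ ∃ c : X, (∀ i, i < κ₁.ord → a i < c) ∧ (∀ j, j < κ₂.ord → c < b j)

/-- Let `D` be a `λ`-regular ultrafilter on `I` with `|I| = λ`. There is a
sequence `⟨n_t : t ∈ I⟩` of natural numbers such that for all regular `κ₁, κ₂`
with `κ₁ + κ₂ ≤ λ`, the ultrapower `(ω, <)^I/D` has a `(κ₁, κ₂)`-cut iff the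
ultraproduct `∏_t ({0, …, n_t − 1}, <)/D` (realized as the suborder of elements
below `⟨n_t⟩/D`) has a `(κ₁, κ₂)`-cut. -/
theorem exists_cut_capturing_sequence {I : Type u} (D : Ultrafilter I)
    (lam : Cardinal.{u}) (hI : #I = lam) (hreg : IsRegularFilter (D : Filter I) lam) :
    ∃ n : I → ℕ, ∀ κ₁ κ₂ : Cardinal.{u}, κ₁.IsRegular → κ₂.IsRegular →
      κ₁ + κ₂ ≤ lam →
      (HasCut (Germ (D : Filter I) ℕ) κ₁ κ₂ ↔
        HasCut {x : Germ (D : Filter I) ℕ // x < (n : Germ (D : Filter I) ℕ)} κ₁ κ₂) := by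
  classical
  obtain ⟨X, hXD, hXfin⟩ := hreg
  refine ⟨fun t => (hXfin t).toFinset.card + 1, ?_⟩
  intro κ₁ κ₂ hκ₁ hκ₂ hsum
  have hκ₂pos : (0 : Ordinal.{u}) < κ₂.ord := by
    rw [← Cardinal.ord_zero]; exact Cardinal.ord_lt_ord.2 hκ₂.pos
  constructor
  · -- forward direction: a cut in the ultrapower gives a cut below `n`
    rintro ⟨a, b, ha, hb, hab, hno⟩
    -- representatives
    set F : Ordinal.{u} → I → ℕ := fun i => Quotient.out (a i) with hF
    set G : Ordinal.{u} → I → ℕ := fun j => Quotient.out (b j) with hG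
    have hFa : ∀ i, (↑(F i) : Germ (D : Filter I) ℕ) = a i := fun i => Quotient.out_eq _
    have hGb : ∀ j, (↑(G j) : Germ (D : Filter I) ℕ) = b j := fun j => Quotient.out_eq _
    -- an injection of the index set into the regularizing family
    have hle : #(↥(Set.Iio κ₁.ord) ⊕ ↥(Set.Iio κ₂.ord)) ≤ #(↥(Set.Iio lam.ord)) := by
      simp only [Cardinal.mk_sum, Ordinal.mk_Iio_ordinal, Cardinal.card_ord, Cardinal.lift_lift,
        Cardinal.lift_id, ← Cardinal.lift_add, Cardinal.lift_le]
      exact hsum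
    obtain ⟨e⟩ := (Cardinal.le_def _ _).mp hle
    set val : (↥(Set.Iio κ₁.ord) ⊕ ↥(Set.Iio κ₂.ord)) → I → ℕ :=
      Sum.elim (fun i => F i.1) (fun j => G j.1) with hval
    have hAct : ∀ t : I, {p | t ∈ X (e p)}.Finite := fun t =>
      Set.Finite.preimage e.injective.injOn (hXfin t)
    set St : I → Finset ℕ := fun t => (hAct t).toFinset.image fun p => val p t with hSt
    have hStcard : ∀ t, (St t).card ≤ (hXfin t).toFinset.card := by
      intro t
      refine le_trans Finset.card_image_le
        (Finset.card_le_card_of_injOn e ?_ e.injective.injOn)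
      intro p hp
      rw [Finset.mem_coe, Set.Finite.mem_toFinset] at hp ⊢
      exact hp
    have hmem : ∀ p t, t ∈ X (e p) → val p t ∈ St t := fun p t ht =>
      Finset.mem_image_of_mem _ ((hAct t).mem_toFinset.2 ht)
    -- ranks
    set rAt : I → ℕ → ℕ := fun t v => ((St t).filter (· < v)).card with hrAt
    have hmono : ∀ t (v w : ℕ), v ≤ w → rAt t v ≤ rAt t w := by
      intro t v w hvw
      exact Finset.card_le_card
        (Finset.monotone_filter_right _ fun x _ hx => lt_of_lt_of_le hx hvw)
    have hstrict : ∀ t (v w : ℕ), v ∈ St t → v < w → rAt t v < rAt t w := by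
      intro t v w hv hvw
      refine Finset.card_lt_card
        ((Finset.ssubset_iff_of_subset
          (Finset.monotone_filter_right _ fun x _ hx => lt_trans hx hvw)).2 ?_)
      exact ⟨v, Finset.mem_filter.2 ⟨hv, hvw⟩, by simp⟩
    have hrle : ∀ t v, rAt t v ≤ (St t).card := fun t v =>
      Finset.card_le_card (Finset.filter_subset _ _)
    -- surjectivity of the rank function onto an initial segment
    have hsurj : ∀ t m, m < (St t).card → ∃ v, v ∈ St t ∧ rAt t v = m := by
      intro t m hm
      have hinj : Set.InjOn (rAt t) ↑(St t) := by
        intro v hv w hw hvw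
        by_contra hne
        rcases lt_or_gt_of_ne hne with h | h
        · exact absurd hvw (ne_of_lt (hstrict t v w hv h))
        · exact absurd hvw.symm (ne_of_lt (hstrict t w v hw h))
      have hsub : (St t).image (rAt t) ⊆ Finset.range (St t).card := by
        intro m' hm'
        obtain ⟨v, hv, rfl⟩ := Finset.mem_image.1 hm'
        refine Finset.mem_range.2 (Finset.card_lt_card ?_)
        exact (Finset.ssubset_iff_of_subset (Finset.filter_subset _ _)).2
          ⟨v, hv, by simp⟩
      have heq : (St t).image (rAt t) = Finset.range (St t).card :=
        Finset.eq_of_subset_of_card_le hsub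
          (by rw [Finset.card_image_of_injOn hinj, Finset.card_range])
      have hmmem : m ∈ (St t).image (rAt t) := by
        rw [heq]; exact Finset.mem_range.2 hm
      obtain ⟨v, hv, hveq⟩ := Finset.mem_image.1 hmmem
      exact ⟨v, hv, hveq⟩
    -- the collapsed sequences
    set A : Ordinal.{u} → I → ℕ := fun i t => rAt t (F i t) with hA
    set B : Ordinal.{u} → I → ℕ := fun j t => rAt t (G j t) with hB
    have hAmono : ∀ i j, i < j → j < κ₁.ord →
        (↑(A i) : Germ (D : Filter I) ℕ) < ↑(A j) := by
      intro i j hij hj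
      have h1 : ∀ᶠ t in (D : Filter I), F i t < F j t :=
        Germ.coe_lt.1 (by rw [hFa i, hFa j]; exact ha i j hij hj)
      refine Germ.coe_lt.2 ?_
      filter_upwards [h1, hXD (e (Sum.inl ⟨i, hij.trans hj⟩))] with t h1t h2t
      exact hstrict t _ _ (hmem (Sum.inl ⟨i, hij.trans hj⟩) t h2t) h1t
    have hBanti : ∀ i j, i < j → j < κ₂.ord →
        (↑(B j) : Germ (D : Filter I) ℕ) < ↑(B i) := by
      intro i j hij hj
      have h1 : ∀ᶠ t in (D : Filter I), G j t < G i t :=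
        Germ.coe_lt.1 (by rw [hGb i, hGb j]; exact hb i j hij hj)
      refine Germ.coe_lt.2 ?_
      filter_upwards [h1, hXD (e (Sum.inr ⟨j, hj⟩))] with t h1t h2t
      exact hstrict t _ _ (hmem (Sum.inr ⟨j, hj⟩) t h2t) h1t
    have hABlt : ∀ i j, i < κ₁.ord → j < κ₂.ord →
        (↑(A i) : Germ (D : Filter I) ℕ) < ↑(B j) := by
      intro i j hi hj
      have h1 : ∀ᶠ t in (D : Filter I), F i t < G j t :=
        Germ.coe_lt.1 (by rw [hFa i, hGb j]; exact hab i j hi hj)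
      refine Germ.coe_lt.2 ?_
      filter_upwards [h1, hXD (e (Sum.inl ⟨i, hi⟩))] with t h1t h2t
      exact hstrict t _ _ (hmem (Sum.inl ⟨i, hi⟩) t h2t) h1t
    have hAbd : ∀ i, (↑(A i) : Germ (D : Filter I) ℕ) <
        ↑(fun t => (hXfin t).toFinset.card + 1 : I → ℕ) :=
      fun i => Germ.coe_lt.2 (Eventually.of_forall fun t =>
        Nat.lt_succ_of_le (le_trans (hrle t _) (hStcard t)))
    have hBbd : ∀ j, (↑(B j) : Germ (D : Filter I) ℕ) <
        ↑(fun t => (hXfin t).toFinset.card + 1 : I → ℕ) :=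
      fun j => Germ.coe_lt.2 (Eventually.of_forall fun t =>
        Nat.lt_succ_of_le (le_trans (hrle t _) (hStcard t)))
    -- the collapsed sequences still form a cut (in the whole germ order)
    have hnofill : ¬ ∃ c : Germ (D : Filter I) ℕ,
        (∀ i, i < κ₁.ord → (↑(A i) : Germ (D : Filter I) ℕ) < c) ∧
        (∀ j, j < κ₂.ord → c < ↑(B j)) := by
      rintro ⟨c, hc1, hc2⟩
      set h : I → ℕ := Quotient.out c with hh
      have hch : (↑h : Germ (D : Filter I) ℕ) = c := Quotient.out_eq c
      choose! w hw1 hw2 using hsurj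
      set u : I → ℕ := fun t => w t (h t) with hu
      have hev0 : ∀ᶠ t in (D : Filter I), h t < (St t).card := by
        have h1 : ∀ᶠ t in (D : Filter I), h t < B 0 t :=
          Germ.coe_lt.1 (by rw [hch]; exact hc2 0 hκ₂pos)
        filter_upwards [h1] with t ht
        exact lt_of_lt_of_le ht (hrle t _)
      refine hno ⟨↑u, ?_, ?_⟩
      · intro i hi
        rw [← hFa i]
        refine Germ.coe_lt.2 ?_
        have h1 : ∀ᶠ t in (D : Filter I), A i t < h t :=
          Germ.coe_lt.1 (by rw [hch]; exact hc1 i hi)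
        filter_upwards [h1, hXD (e (Sum.inl ⟨i, hi⟩)), hev0] with t h1t h2t h3t
        by_contra hle
        push_neg at hle
        have h4 : rAt t (u t) ≤ rAt t (F i t) := hmono t _ _ hle
        rw [hw2 t (h t) h3t] at h4
        exact absurd (lt_of_lt_of_le h1t h4) (lt_irrefl _)
      · intro j hj
        rw [← hGb j]
        refine Germ.coe_lt.2 ?_
        have h1 : ∀ᶠ t in (D : Filter I), h t < B j t :=
          Germ.coe_lt.1 (by rw [hch]; exact hc2 j hj)
        filter_upwards [h1, hXD (e (Sum.inr ⟨j, hj⟩))] with t h1t h2t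
        have h3t : h t < (St t).card := lt_of_lt_of_le h1t (hrle t _)
        by_contra hle
        push_neg at hle
        have h4 : rAt t (G j t) ≤ rAt t (u t) := hmono t _ _ hle
        rw [hw2 t (h t) h3t] at h4
        exact absurd (lt_of_lt_of_le h1t h4) (lt_irrefl _)
    exact ⟨fun i => ⟨↑(A i), hAbd i⟩, fun j => ⟨↑(B j), hBbd j⟩,
      fun i j hij hj => Subtype.mk_lt_mk.2 (hAmono i j hij hj),
      fun i j hij hj => Subtype.mk_lt_mk.2 (hBanti i j hij hj),
      fun i j hi hj => Subtype.mk_lt_mk.2 (hABlt i j hi hj),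
      fun ⟨⟨c, hcn⟩, h1, h2⟩ => hnofill ⟨c,
        fun i hi => Subtype.mk_lt_mk.1 (h1 i hi),
        fun j hj => Subtype.mk_lt_mk.1 (h2 j hj)⟩⟩
  · -- backward direction: a cut below `n` is already a cut in the ultrapower
    rintro ⟨a, b, ha, hb, hab, hno⟩
    refine ⟨fun i => (a i).1, fun j => (b j).1,
      fun i j hij hj => Subtype.coe_lt_coe.2 (ha i j hij hj),
      fun i j hij hj => Subtype.coe_lt_coe.2 (hb i j hij hj),
      fun i j hi hj => Subtype.coe_lt_coe.2 (hab i j hi hj), ?_⟩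
    rintro ⟨c, hc1, hc2⟩
    have hcn : c < (↑(fun t => (hXfin t).toFinset.card + 1 : I → ℕ) :
        Germ (D : Filter I) ℕ) := lt_trans (hc2 0 hκ₂pos) (b 0).2
    exact hno ⟨⟨c, hcn⟩, fun i hi => Subtype.coe_lt_coe.1 (hc1 i hi),
      fun j hj => Subtype.coe_lt_coe.1 (hc2 j hj)⟩
end

section
/- Let (X, <) be a linear order with at least two elements, let T be the set of finite sequences of elements of X partially ordered by initial segment ⊴, and fix 0 < 1 in {0,1}. Define a relation <_X on T × {0,1} by: if c = d then (c,i) <_X (d,j) iff i < j; if c ⊴ d and c ≠ d, then (c,0) <_X (d,0) <_X (d,1) <_X (c,1); and if c, d are ⊴-incomparable with common initial segment e, c extending e⌢⟨n_c⟩ and d extending e⌢⟨n_d⟩ (so n_c ≠ n_d), then (c,s) <_X (d,t) iff n_c < n_d, for any s,t ∈ {0,1}. Then <_X is a linear order on T × {0,1}, and for any regular cardinal κ and any strictly ⊴-increasing sequence ⟨c_i : i < κ⟩ in T with no ⊴-upper bound in T, the pair (⟨(c_i, 0) : i < κ⟩, ⟨(c_i, 1) : i < κ⟩) represents a (κ,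 κ)-cut in (T × {0,1}, <_X). -/
open Cardinal List

section Aux
variable {X : Type*} [LinearOrder X]

private def Ymk (b : Bool) : WithBot (WithTop X) :=
  if b then ((⊤ : WithTop X) : WithBot (WithTop X)) else ⊥

private def Yemb (x : X) : WithBot (WithTop X) := ((x : WithTop X) : WithBot (WithTop X))

private lemma bot_lt_Yemb (x : X) : (⊥ : WithBot (WithTop X)) < Yemb x := WithBot.bot_lt_coe _

private lemma Yemb_lt_top (x : X) : Yemb x < Ymk true := by
  exact WithBot.coe_lt_coe.2 (WithTop.coe_lt_top x)

private lemma Ybot_lt_Ytop : Ymk (X := X) false < Ymk true := by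
  simp [Ymk, WithBot.bot_lt_coe]

private lemma Yemb_lt_iff {x y : X} : Yemb x < Yemb y ↔ x < y := by
  simp [Yemb, WithBot.coe_lt_coe, WithTop.coe_lt_coe]

private lemma Yemb_inj : Function.Injective (Yemb (X := X)) := by
  intro a b h
  simpa [Yemb] using h

private lemma Ymk_inj : Function.Injective (Ymk (X := X)) := by
  intro a b h
  cases a <;> cases b <;> simp_all [Ymk]

private def g (p : List X × Bool) : List (WithBot (WithTop X)) := p.1.map Yemb ++ [Ymk p.2]

private lemma g_inj : Function.Injective (g (X := X)) := by
  rintro ⟨c, s⟩ ⟨d, t⟩ h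
  simp only [g] at h
  have hl : (c.map Yemb).length = (d.map Yemb).length := by
    have := congrArg List.length h
    simpa using this
  obtain ⟨h1, h2⟩ := List.append_inj h hl
  have hc : c = d := List.map_injective_iff.2 Yemb_inj h1
  have hs : s = t := Ymk_inj (by simpa using h2)
  simp [hc, hs]

private lemma lex_strip (u v w : List (WithBot (WithTop X))) :
    Lex (· < ·) (u ++ v) (u ++ w) ↔ Lex (· < ·) v w := by
  induction u with
  | nil => simp
  | cons a u ih => simpa [List.cons_append, List.lex_cons_iff] using ih

private lemma prefix_trichotomy (c d : List X) :
    c <+: d ∨ d <+: c ∨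
      ∃ e nc nd, nc ≠ nd ∧ (e ++ [nc]) <+: c ∧ (e ++ [nd]) <+: d := by
  induction c generalizing d with
  | nil => exact Or.inl (List.nil_prefix)
  | cons a c ih =>
    cases d with
    | nil => exact Or.inr (Or.inl List.nil_prefix)
    | cons b d =>
      rcases eq_or_ne a b with rfl | hab
      · rcases ih d with h | h | ⟨e, nc, nd, hne, h1, h2⟩
        · exact Or.inl (List.cons_prefix_cons.2 ⟨rfl, h⟩)
        · exact Or.inr (Or.inl (List.cons_prefix_cons.2 ⟨rfl, h⟩))
        · exact Or.inr (Or.inr ⟨a :: e, nc, nd, hne, List.cons_prefix_cons.2 ⟨rfl, h1⟩,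
            List.cons_prefix_cons.2 ⟨rfl, h2⟩⟩)
      · exact Or.inr (Or.inr ⟨[], a, b, hab, ⟨c, rfl⟩, ⟨d, rfl⟩⟩)

private lemma lex_cons_ne {a b : WithBot (WithTop X)} {A B : List (WithBot (WithTop X))}
    (h : a ≠ b) : Lex (· < ·) (a :: A) (b :: B) ↔ a < b := by
  constructor
  · intro hl
    cases hl with
    | rel h' => exact h'
    | cons _ => exact absurd rfl h
  · exact fun h' => List.Lex.rel h'

private lemma Ymk_ne_Yemb (b : Bool) (x : X) : Ymk b ≠ Yemb x := by
  cases b <;> simp [Ymk, Yemb]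

private lemma r_iff (r : List X × Bool → List X × Bool → Prop)
    (heq : ∀ (c : List X) (i j : Bool), r (c, i) (c, j) ↔ i < j)
    (hpre : ∀ c d : List X, c <+: d → c ≠ d → ∀ s t : Bool,
      (r (c, s) (d, t) ↔ s = false) ∧ (r (d, t) (c, s) ↔ s = true))
    (hinc : ∀ (e : List X) (nc nd : X) (c d : List X) (s t : Bool),
      nc ≠ nd → (e ++ [nc]) <+: c → (e ++ [nd]) <+: d →
      (r (c, s) (d, t) ↔ nc < nd)) :
    ∀ p q : List X × Bool, r p q ↔ Lex (· < ·) (g p) (g q) := by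
  rintro ⟨c, s⟩ ⟨d, t⟩
  rcases prefix_trichotomy c d with h | h | ⟨e, nc, nd, hne, h1, h2⟩
  · rcases eq_or_ne c d with rfl | hcd
    · rw [heq]
      simp only [g, lex_strip, List.lex_singleton_iff]
      cases s <;> cases t <;>
        simp [Ybot_lt_Ytop, lt_irrefl, not_lt_of_gt Ybot_lt_Ytop]
    · obtain ⟨u, rfl⟩ := h
      have hu : u ≠ [] := by rintro rfl; exact hcd (by simp)
      cases u with
      | nil => exact absurd rfl hu
      | cons x u' =>
        rw [(hpre c _ ⟨x :: u', rfl⟩ hcd s t).1]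
        simp only [g, List.map_append, List.map_cons, List.append_assoc, List.cons_append,
          lex_strip]
        rw [show ([Ymk s] : List (WithBot (WithTop X))) = Ymk s :: [] from rfl,
          lex_cons_ne (Ymk_ne_Yemb s x)]
        cases s
        · simp [bot_lt_Yemb, Ymk]
        · simp [Ymk, not_lt_of_gt (Yemb_lt_top x)]
  · rcases eq_or_ne d c with rfl | hdc
    · rw [heq]
      simp only [g, lex_strip, List.lex_singleton_iff]
      cases s <;> cases t <;>
        simp [Ybot_lt_Ytop, lt_irrefl, not_lt_of_gt Ybot_lt_Ytop]
    · obtain ⟨u, rfl⟩ := h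
      have hu : u ≠ [] := by rintro rfl; exact hdc (by simp)
      cases u with
      | nil => exact absurd rfl hu
      | cons x u' =>
        rw [(hpre d _ ⟨x :: u', rfl⟩ hdc t s).2]
        simp only [g, List.map_append, List.map_cons, List.append_assoc, List.cons_append,
          lex_strip]
        rw [show ([Ymk t] : List (WithBot (WithTop X))) = Ymk t :: [] from rfl,
          lex_cons_ne (Ymk_ne_Yemb t x).symm]
        cases t
        · simp [Ymk]
        · simp [Ymk, lt_top_iff_ne_top, Yemb]
  · rw [hinc e nc nd c d s t hne h1 h2]
    obtain ⟨u, rfl⟩ := h1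
    obtain ⟨v, rfl⟩ := h2
    simp only [g, List.map_append, List.map_cons, List.append_assoc, List.cons_append,
      List.map_nil, List.nil_append, lex_strip]
    rw [lex_cons_ne (fun hh => hne (Yemb_inj hh)), Yemb_lt_iff]

end Aux


/-- Collapsing a tree of finite sequences to a linear order. Let `X` be a linear
order with at least two elements, `T = List X` ordered by the prefix relation
`<+:`, and consider `T × Bool` (with `false < true` playing the role of `0 < 1`).

Suppose `r` is the relation on `T × Bool` determined by:
* if `c = d` then `(c, i) r (d, j)` iff `i < j`;
* if `c` is a proper prefix of `d` then `(c, 0) r (d, 0) r (d, 1) r (c, 1)`,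
  i.e. `(c, s) r (d, t)` iff `s = 0`, and `(d, t) r (c, s)` iff `s = 1`;
* if `c, d` are incomparable, with common initial segment `e`, `e⌢⟨n_c⟩ ⊴ c`,
  `e⌢⟨n_d⟩ ⊴ d` (so `n_c ≠ n_d`), then `(c, s) r (d, t)` iff `n_c < n_d`.

Then `r` is a (strict) linear order on `T × Bool`, and for every regular `κ` and
every strictly `⊴`-increasing `κ`-sequence `⟨c_i : i < κ⟩` in `T` with no
`⊴`-upper bound, the pair `(⟨(c_i, 0) : i < κ⟩, ⟨(c_i, 1) : i < κ⟩)` represents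
a `(κ, κ)`-cut in `(T × Bool, r)`. -/
theorem tree_collapse_linear_order_and_cut {X : Type*} [LinearOrder X] [Nontrivial X]
    (r : List X × Bool → List X × Bool → Prop)
    (heq : ∀ (c : List X) (i j : Bool), r (c, i) (c, j) ↔ i < j)
    (hpre : ∀ c d : List X, c <+: d → c ≠ d → ∀ s t : Bool,
      (r (c, s) (d, t) ↔ s = false) ∧ (r (d, t) (c, s) ↔ s = true))
    (hinc : ∀ (e : List X) (nc nd : X) (c d : List X) (s t : Bool),
      nc ≠ nd → (e ++ [nc]) <+: c → (e ++ [nd]) <+: d →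
      (r (c, s) (d, t) ↔ nc < nd)) :
    IsStrictTotalOrder (List X × Bool) r ∧
    ∀ κ : Cardinal, κ.IsRegular →
      ∀ c : Ordinal → List X,
        (∀ i j, i < j → j < κ.ord → c i <+: c j ∧ c i ≠ c j) →
        (¬ ∃ u : List X, ∀ i, i < κ.ord → c i <+: u) →
        (∀ i j, i < j → j < κ.ord → r (c i, false) (c j, false)) ∧
        (∀ i j, i < j → j < κ.ord → r (c j, true) (c i, true)) ∧
        (∀ i j, i < κ.ord → j < κ.ord → r (c i, false) (c j, true)) ∧
        ¬ ∃ z : List X × Bool,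
          (∀ i, i < κ.ord → r (c i, false) z) ∧ (∀ i, i < κ.ord → r z (c i, true)) := by
  have key := r_iff r heq hpre hinc
  haveI : IsStrictTotalOrder (WithBot (WithTop X)) (· < ·) :=
    { trichotomous := fun a b h1 h2 => ((lt_trichotomy a b).resolve_left h1).resolve_right h2, irrefl := lt_irrefl, trans := fun _ _ _ => lt_trans }
  constructor
  · refine { trichotomous := ?_, irrefl := ?_, trans := ?_ }
    · intro x y hxy hyx
      rcases trichotomous_of (List.Lex (· < ·)) (g x) (g y) with h | h | h
      · exact absurd ((key x y).2 h) hxy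
      · exact g_inj h
      · exact absurd ((key y x).2 h) hyx
    · intro x h
      exact irrefl_of (List.Lex (· < ·)) (g x) ((key x x).1 h)
    · intro a b c h1 h2
      exact (key a c).2 (lt_trans (α := List (WithBot (WithTop X))) ((key a b).1 h1) ((key b c).1 h2))
  · intro κ hκ c hmono hub
    refine ⟨?_, ?_, ?_, ?_⟩
    · intro i j hij hj
      exact ((hpre _ _ (hmono i j hij hj).1 (hmono i j hij hj).2 false false).1).2 rfl
    · intro i j hij hj
      exact ((hpre _ _ (hmono i j hij hj).1 (hmono i j hij hj).2 true true).2).2 rfl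
    · intro i j hi hj
      rcases lt_trichotomy i j with h | h | h
      · exact ((hpre _ _ (hmono i j h hj).1 (hmono i j h hj).2 false true).1).2 rfl
      · subst h; exact (heq _ _ _).2 (by decide)
      · exact ((hpre _ _ (hmono j i h hi).1 (hmono j i h hi).2 true false).2).2 rfl
    · rintro ⟨⟨u, b⟩, hl, hr⟩
      apply hub
      refine ⟨u, fun i hi => ?_⟩
      rcases prefix_trichotomy (c i) u with h | h | ⟨e, nc, nd, hne, h1, h2⟩
      · exact h
      · rcases eq_or_ne u (c i) with hh | hne
        · subst hh
          have hb1 := (heq _ _ _).1 (hl i hi)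
          have hb2 := (heq _ _ _).1 (hr i hi)
          cases b
          · exact absurd hb1 (by decide)
          · exact absurd hb2 (by decide)
        · have hb1 := ((hpre u (c i) h hne b true).1).1 (hr i hi)
          have hb2 := ((hpre u (c i) h hne b false).2).1 (hl i hi)
          simp [hb1] at hb2
      · have hb1 := (hinc e nc nd (c i) u false b hne h1 h2).1 (hl i hi)
        have hb2 := (hinc e nd nc u (c i) b true hne.symm h2 h1).1 (hr i hi)
        exact absurd hb1 (not_lt_of_gt hb2)
end

section
/- (Rothberger) If 𝔭 = ℵ₁ then 𝔭 = 𝔱. -/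
open Cardinal

/-- `A ⊆* B`: `A \ B` is finite. -/
def AlmostSub (A B : Set ℕ) : Prop := (A \ B).Finite

/-- Strong finite intersection property: every nonempty finite subfamily has
infinite intersection. -/
def HasSFIP (F : Set (Set ℕ)) : Prop :=
  ∀ G : Finset (Set ℕ), ↑G ⊆ F → G.Nonempty → (⋂ A ∈ G, (A : Set ℕ)).Infinite

/-- `F` has an infinite pseudo-intersection. -/
def HasPseudoInter (F : Set (Set ℕ)) : Prop :=
  ∃ A : Set ℕ, A.Infinite ∧ ∀ B ∈ F, AlmostSub A B

/-- A tower: a family of infinite subsets of `ℕ`, well-ordered by `⊇*`, with no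
infinite pseudo-intersection. -/
def IsTower (T : Set (Set ℕ)) : Prop :=
  (∀ A ∈ T, A.Infinite) ∧
  IsWellOrder T
    (fun A B => AlmostSub (B : Set ℕ) (A : Set ℕ) ∧ ¬ AlmostSub (A : Set ℕ) (B : Set ℕ)) ∧
  ¬ HasPseudoInter T

/-- The pseudo-intersection number `𝔭`. -/
noncomputable def pNum : Cardinal :=
  sInf {c : Cardinal | ∃ F : Set (Set ℕ),
    (∀ A ∈ F, A.Infinite) ∧ HasSFIP F ∧ ¬ HasPseudoInter F ∧ #↥F = c}

/-- The tower number `𝔱`. -/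
noncomputable def tNum : Cardinal :=
  sInf {c : Cardinal | ∃ T : Set (Set ℕ), IsTower T ∧ #↥T = c}

namespace Roth
open scoped Classical


theorem as_refl (A : Set ℕ) : AlmostSub A A := by simp [AlmostSub]

theorem as_of_subset {A B : Set ℕ} (h : A ⊆ B) : AlmostSub A B := by
  simp [AlmostSub, Set.diff_eq_empty.2 h]

theorem as_trans {A B C : Set ℕ} (h1 : AlmostSub A B) (h2 : AlmostSub B C) : AlmostSub A C := by
  refine Set.Finite.subset (h1.union h2) ?_
  intro x hx
  rcases hx with ⟨hxA, hxC⟩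
  by_cases hB : x ∈ B
  · exact Or.inr ⟨hB, hxC⟩
  · exact Or.inl ⟨hxA, hB⟩

theorem as_mono_left {A' A B : Set ℕ} (h : A' ⊆ A) (h2 : AlmostSub A B) : AlmostSub A' B :=
  Set.Finite.subset h2 (Set.diff_subset_diff_left h)

theorem inter_infinite_of_as {A B : Set ℕ} (hA : A.Infinite) (h : AlmostSub A B) :
    (A ∩ B).Infinite := by
  have : A \ (A \ B) ⊆ A ∩ B := by
    intro x hx; exact ⟨hx.1, by_contra fun hB => hx.2 ⟨hx.1, hB⟩⟩
  exact (hA.diff h).mono this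

theorem infinite_of_as_rev {A B : Set ℕ} (hA : A.Infinite) (h : AlmostSub A B) : B.Infinite :=
  ((inter_infinite_of_as hA h).mono Set.inter_subset_right)

/-- Diagonal pseudo-intersection of a countable family given by `u : ℕ → Set ℕ`
whose finite partial intersections are all infinite. -/
theorem exists_pseudoInter (u : ℕ → Set ℕ)
    (h : ∀ m, (⋂ k ∈ Finset.range (m + 1), u k).Infinite) :
    ∃ X : Set ℕ, X.Infinite ∧ (∀ k, (X \ u k).Finite) ∧ X ⊆ u 0 := by
  set D : ℕ → Set ℕ := fun m => ⋂ k ∈ Finset.range (m + 1), u k with hD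
  have hDsub : ∀ m k, k ≤ m → D m ⊆ u k := by
    intro m k hk
    intro x hx
    simp only [hD, Set.mem_iInter] at hx
    exact hx k (Finset.mem_range.2 (Nat.lt_succ_of_le hk))
  have hDanti : ∀ m n, m ≤ n → D n ⊆ D m := by
    intro m n hmn
    intro x hx
    simp only [hD, Set.mem_iInter] at *
    intro k hk
    exact hx k (Finset.mem_range.2 (lt_of_lt_of_le (Finset.mem_range.1 hk) (by omega)))
  -- recursive choice of a strictly increasing sequence z with z n ∈ D n
  have hstep : ∀ n (a : ℕ), ∃ b ∈ D n, a < b := fun n a => (h n).exists_gt a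
  choose f hf1 hf2 using hstep
  let z : ℕ → ℕ := fun n => Nat.rec (f 0 0) (fun n ih => f (n+1) ih) n
  have hz0 : z 0 ∈ D 0 := hf1 0 0
  have hzs : ∀ n, z (n+1) ∈ D (n+1) ∧ z n < z (n+1) := fun n => ⟨hf1 _ _, hf2 _ _⟩
  have hzD : ∀ n, z n ∈ D n := by
    intro n; cases n with
    | zero => exact hz0
    | succ n => exact (hzs n).1
  have hzmono : StrictMono z := strictMono_nat_of_lt_succ (fun n => (hzs n).2)
  refine ⟨Set.range z, Set.infinite_range_of_injective hzmono.injective, ?_, ?_⟩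
  · intro k
    have : Set.range z \ u k ⊆ z '' {m | m < k} := by
      rintro x ⟨⟨m, rfl⟩, hxu⟩
      refine ⟨m, ?_, rfl⟩
      simp only [Set.mem_setOf_eq]
      by_contra hmk
      push_neg at hmk
      exact hxu (hDsub m k hmk (hzD m))
    exact Set.Finite.subset ((Set.finite_lt_nat k).image z) this
  · rintro x ⟨m, rfl⟩
    exact hDsub m 0 (Nat.zero_le m) (hzD m)




abbrev II : Type := ((aleph 1).ord).ToType

theorem mkII : #II = aleph 1 := by rw [Cardinal.mk_toType, card_ord]

instance : Infinite II := by
  rw [Cardinal.infinite_iff, mkII]; exact (aleph0_le_aleph 1)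

theorem countable_Iio (i : II) : (Set.Iio i).Countable := by
  rw [Cardinal.countable_iff_lt_aleph_one]
  exact Cardinal.mk_Iio_ord_toType i

theorem countable_Iic (i : II) : (Set.Iic i).Countable := by
  have : Set.Iic i = Set.Iio i ∪ {i} := by
    ext j; simp [le_iff_lt_or_eq]
  rw [this]
  exact (countable_Iio i).union (Set.countable_singleton i)

theorem exists_upper {α : Type} (hc : #α < aleph 1) (f : α → II) :
    ∃ b : II, ∀ a, f a < b := by
  have hlim : Order.IsSuccLimit ((aleph 1).ord) := Cardinal.isSuccLimit_ord (aleph0_le_aleph 1)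
  set e := Ordinal.ToType.mk (o := (aleph 1).ord) with he
  let F : α → Ordinal := fun a => (e.symm (f a)).1
  have hsup : (⨆ a, F a) < (aleph 1).ord := by
    refine Ordinal.iSup_lt_ord ?_ (fun a => (e.symm (f a)).2)
    rwa [(Cardinal.isRegular_aleph_one).cof_eq]
  have hsup1 : (⨆ a, F a) + 1 < (aleph 1).ord := by
    rw [Ordinal.add_one_eq_succ]
    exact hlim.succ_lt hsup
  refine ⟨e ⟨_, hsup1⟩, fun a => ?_⟩
  have h1 : f a = e (e.symm (f a)) := (e.apply_symm_apply _).symm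
  rw [h1, e.lt_iff_lt, ← Subtype.coe_lt_coe]
  show F a < (⨆ a, F a) + 1
  refine lt_of_le_of_lt (le_ciSup (Ordinal.bddAbove_range F) a) ?_
  rw [Ordinal.add_one_eq_succ]
  exact Order.lt_succ _

/-- The key consequence of having no tower of size `ℵ₁`. -/
def Star : Prop := ∀ y : II → Set ℕ, (∀ i, (y i).Infinite) →
  (∀ ⦃j i⦄, j < i → AlmostSub (y i) (y j) ∧ (y j \ y i).Infinite) →
  ∃ Y : Set ℕ, Y.Infinite ∧ ∀ i, AlmostSub Y (y i)

theorem star_of_noTower (hNT : ¬ ∃ T : Set (Set ℕ), IsTower T ∧ #↥T = aleph 1) : Star := by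
  intro y hinf hdec
  by_contra hY
  push_neg at hY
  set T : Set (Set ℕ) := Set.range y with hT
  have yinj : Function.Injective y := by
    intro a b hab
    rcases lt_trichotomy a b with h | h | h
    · exact absurd (hab ▸ (hdec h).2) (by simp [Set.diff_self, Set.not_infinite])
    · exact h
    · exact absurd (hab ▸ (hdec h).2) (by simp [Set.diff_self, Set.not_infinite])
  apply hNT
  refine ⟨T, ⟨?_, ?_, ?_⟩, ?_⟩
  · rintro B ⟨i, rfl⟩; exact hinf i
  · -- well order via embedding into II
    set r : ↥T → ↥T → Prop :=
      fun A B => AlmostSub (B : Set ℕ) (A : Set ℕ) ∧ ¬ AlmostSub (A : Set ℕ) (B : Set ℕ) with hr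
    have idx : ∀ B : ↥T, ∃ i, y i = (B : Set ℕ) := fun B => B.2
    choose ind hind using idx
    have hrlt : ∀ A B : ↥T, r A B ↔ ind A < ind B := by
      intro A B
      constructor
      · intro hAB
        rcases lt_trichotomy (ind A) (ind B) with h | h | h
        · exact h
        · exfalso
          have : (A : Set ℕ) = (B : Set ℕ) := by rw [← hind A, ← hind B, h]
          exact hAB.2 (this ▸ as_refl _)
        · exfalso
          have := (hdec h).1
          rw [hind A, hind B] at this
          exact hAB.2 this
      · intro h
        have h1 := (hdec h).1
        have h2 := (hdec h).2
        rw [hind A, hind B] at h1 h2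
        exact ⟨h1, fun hc => (h2.mono (Set.diff_subset_diff_left (by rfl))) hc⟩
    have indinj : Function.Injective ind := by
      intro A B hAB
      apply Subtype.ext
      rw [← hind A, ← hind B, hAB]
    let f : (fun A B : ↥T => r A B) ↪r ((· < ·) : II → II → Prop) :=
      ⟨⟨ind, indinj⟩, by intro A B; exact (hrlt A B).symm⟩
    haveI : IsWellOrder II (· < ·) := isWellOrder_lt
    exact f.isWellOrder
  · -- no pseudo-intersection
    rintro ⟨Y, hYinf, hYsub⟩
    obtain ⟨i, hi⟩ := hY Y hYinf
    exact hi (hYsub (y i) ⟨i, rfl⟩)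
  · rw [hT, Cardinal.mk_range_eq _ yinj, mkII]








theorem pseudo_of_decreasing (hstar : Star) (x : II → Set ℕ)
    (hinf : ∀ i, (x i).Infinite)
    (hdec : ∀ ⦃j i⦄, j < i → AlmostSub (x i) (x j)) :
    ∃ Y : Set ℕ, Y.Infinite ∧ ∀ i, AlmostSub Y (x i) := by
  by_cases hstab : ∃ i₀, ∀ i, i₀ ≤ i → AlmostSub (x i₀) (x i)
  · obtain ⟨i₀, h0⟩ := hstab
    refine ⟨x i₀, hinf i₀, fun i => ?_⟩
    rcases le_or_gt i₀ i with h | h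
    · exact h0 i h
    · exact hdec h
  · push_neg at hstab
    have hdrop : ∀ i₀ : II, ∃ i, i₀ ≤ i ∧ (x i₀ \ x i).Infinite := by
      intro i₀; obtain ⟨i, h1, h2⟩ := hstab i₀
      exact ⟨i, h1, h2⟩
    choose w hw1 hw2 using hdrop
    have wfII : WellFounded ((· < ·) : II → II → Prop) := wellFounded_lt
    have hub : ∀ (i : II) (rec : ∀ j : II, j < i → II),
        ∃ b : II, ∀ (j) (hj : j < i), rec j hj < b := by
      intro i rec
      have hc : #(↥(Set.Iio i)) < aleph 1 := Cardinal.mk_Iio_ord_toType i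
      obtain ⟨b, hb⟩ := exists_upper hc (fun j => rec j.1 j.2)
      exact ⟨b, fun j hj => hb ⟨j, hj⟩⟩
    set β : II → II := WellFounded.fix wfII
      (fun i rec => w (hub i rec).choose) with hβ
    have hβeq : ∀ i, β i = w ((hub i (fun j _ => β j)).choose) := by
      intro i
      conv_lhs => rw [hβ, WellFounded.fix_eq]
    have hβmono : ∀ ⦃j i : II⦄, j < i → β j < β i := by
      intro j i hj
      have h1 : β j < (hub i (fun j _ => β j)).choose :=
        (hub i (fun j _ => β j)).choose_spec j hj
      have h2 : (hub i (fun j _ => β j)).choose ≤ w ((hub i (fun j _ => β j)).choose) := hw1 _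
      rw [hβeq i]
      exact lt_of_lt_of_le h1 h2
    have hstrict : ∀ ⦃j i : II⦄, j < i → (x (β j) \ x (β i)).Infinite := by
      intro j i hj
      set u := (hub i (fun j _ => β j)).choose with hu
      have h1 : β j < u := (hub i (fun j _ => β j)).choose_spec j hj
      have h2 : (x u \ x (w u)).Infinite := hw2 u
      have h2' : (x u \ x (β i)).Infinite := by rw [hβeq i]; exact h2
      have h3 : (x u \ x (β j)).Finite := hdec h1
      refine (h2'.diff h3).mono ?_
      rintro k ⟨⟨hk1, hk2⟩, hk3⟩
      refine ⟨?_, hk2⟩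
      by_contra hk4
      exact hk3 ⟨hk1, hk4⟩
    have hsm : StrictMono β := fun j i h => hβmono h
    obtain ⟨Y, hY1, hY2⟩ := hstar (fun i => x (β i)) (fun i => hinf _)
      (fun j i hj => ⟨hdec (hβmono hj), hstrict hj⟩)
    refine ⟨Y, hY1, fun i => ?_⟩
    rcases eq_or_lt_of_le (hsm.le_apply (x := i)) with h | h
    · rw [h]; exact hY2 i
    · exact as_trans (hY2 i) (hdec h)

theorem count_range {z : ℕ → ℕ} (hz : StrictMono z) (n : ℕ) :
    Nat.count (· ∈ Set.range z) (z n) = n := by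
  classical
  rw [Nat.count_eq_card_filter_range]
  have h : (Finset.range (z n)).filter (· ∈ Set.range z) = (Finset.range n).image z := by
    ext m
    simp only [Finset.mem_filter, Finset.mem_range, Finset.mem_image, Set.mem_range]
    constructor
    · rintro ⟨hm, k, rfl⟩
      exact ⟨k, hz.lt_iff_lt.mp hm, rfl⟩
    · rintro ⟨k, hk, rfl⟩
      exact ⟨hz.lt_iff_lt.mpr hk, k, rfl⟩
  rw [h, Finset.card_image_of_injective _ hz.injective, Finset.card_range]

theorem count_le_count_add {S T : Set ℕ} (hST : (S \ T).Finite) (t : ℕ) :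
    Nat.count (· ∈ S) t ≤ Nat.count (· ∈ T) t + hST.toFinset.card := by
  classical
  rw [Nat.count_eq_card_filter_range, Nat.count_eq_card_filter_range]
  have h : (Finset.range t).filter (· ∈ S) ⊆
      ((Finset.range t).filter (· ∈ T)) ∪ hST.toFinset := by
    intro m hm
    simp only [Finset.mem_filter, Finset.mem_range] at hm
    by_cases hT : m ∈ T
    · exact Finset.mem_union_left _ (Finset.mem_filter.2 ⟨Finset.mem_range.2 hm.1, hT⟩)
    · exact Finset.mem_union_right _ (by simp [hST.mem_toFinset]; exact ⟨hm.2, hT⟩)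
  exact le_trans (Finset.card_le_card h) (Finset.card_union_le _ _)

theorem le_count {z : ℕ → ℕ} (hz : StrictMono z) {S : Set ℕ} (hzS : ∀ k, z k ∈ S) (n : ℕ) :
    n ≤ Nat.count (· ∈ S) (z n) := by
  classical
  rw [Nat.count_eq_card_filter_range]
  have h : (Finset.range n).image z ⊆ (Finset.range (z n)).filter (· ∈ S) := by
    intro m hm
    simp only [Finset.mem_image, Finset.mem_range] at hm
    obtain ⟨k, hk, rfl⟩ := hm
    exact Finset.mem_filter.2 ⟨Finset.mem_range.2 (hz.lt_iff_lt.mpr hk), hzS k⟩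
  calc n = ((Finset.range n).image z).card := by
        rw [Finset.card_image_of_injective _ hz.injective, Finset.card_range]
    _ ≤ _ := Finset.card_le_card h


theorem inter_biInter_infinite {X : Set ℕ} (hX : X.Infinite) (Ys : Finset (Set ℕ))
    (hYs : ∀ Y ∈ Ys, AlmostSub X Y) : (X ∩ ⋂ Y ∈ Ys, Y).Infinite := by
  have hK : (⋃ Y ∈ Ys, (X \ Y)).Finite :=
    Set.Finite.biUnion Ys.finite_toSet (fun Y hY => hYs Y hY)
  refine (hX.diff hK).mono ?_
  rintro k ⟨hk1, hk2⟩
  refine ⟨hk1, ?_⟩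
  simp only [Set.mem_iInter]
  intro Y hY
  by_contra hkY
  exact hk2 (Set.mem_biUnion hY ⟨hk1, hkY⟩)

theorem biInter_image_eq {α : Type*} (s : Finset α) (u : α → Set ℕ) :
    ⋂ Y ∈ s.image u, Y = ⋂ k ∈ s, u k := by
  ext x; simp

theorem bounded (hstar : Star) (fam : II → ℕ → ℕ) :
    ∃ g : ℕ → ℕ, ∀ i, ∃ N, ∀ m, N ≤ m → fam i m ≤ g m := by
  set Fam : II → ℕ → ℕ := fun i m => (Finset.range (m+1)).sup (fam i) with hFamdef
  have hFmono : ∀ i, Monotone (Fam i) := by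
    intro i a b hab
    exact Finset.sup_mono (Finset.range_subset_range.2 (by omega))
  have hle : ∀ i m, fam i m ≤ Fam i m := fun i m =>
    Finset.le_sup (Finset.mem_range.2 (by omega))
  have wfII : WellFounded ((· < ·) : II → II → Prop) := wellFounded_lt
  set GB : ∀ i : II, (∀ j : II, j < i → Set ℕ) → Set ℕ → Prop :=
    fun i prev X => X.Infinite ∧ (∀ j (hj : j < i), AlmostSub X (prev j hj)) ∧
      ∀ k ∈ X, Fam i (Nat.count (· ∈ X) k) ≤ k with hGB
  set TB : II → Set ℕ := WellFounded.fix wfII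
    (fun i rec => if h : ∃ X, GB i rec X then h.choose else ∅) with hTB
  have hTBeq : ∀ i, TB i = if h : ∃ X, GB i (fun j _ => TB j) X then h.choose else ∅ := by
    intro i; conv_lhs => rw [hTB, WellFounded.fix_eq]
  have hGood : ∀ i, GB i (fun j _ => TB j) (TB i) := by
    intro i
    induction i using WellFounded.induction wfII with
    | _ i IH =>
    have hIic : (Set.Iic i).Countable := countable_Iic i
    obtain ⟨v, hv⟩ := hIic.exists_eq_range ⟨i, le_refl i⟩
    set u : ℕ → Set ℕ := fun m => if _ : v m < i then TB (v m) else Set.univ with hu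
    have hufin : ∀ m, (⋂ k ∈ Finset.range (m+1), u k).Infinite := by
      intro m
      by_cases hw : ∃ k ∈ Finset.range (m+1), v k < i
      · obtain ⟨k0, hk0mem, hk0max⟩ := Finset.exists_max_image
          ((Finset.range (m+1)).filter (fun k => v k < i)) v
          (by obtain ⟨k, hk1, hk2⟩ := hw; exact ⟨k, Finset.mem_filter.2 ⟨hk1, hk2⟩⟩)
        set jm := v k0 with hjm
        have hjmi : jm < i := (Finset.mem_filter.1 hk0mem).2
        have hXinf : (TB jm).Infinite := (IH jm hjmi).1
        have hYs : ∀ Y ∈ (Finset.range (m+1)).image u, AlmostSub (TB jm) Y := by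
          intro Y hY
          obtain ⟨k, hk, rfl⟩ := Finset.mem_image.1 hY
          by_cases hki : v k < i
          · rw [hu]; simp only [dif_pos hki]
            have hvk : v k ≤ jm := hk0max k (Finset.mem_filter.2 ⟨hk, hki⟩)
            rcases eq_or_lt_of_le hvk with h | h
            · rw [h]; exact as_refl _
            · exact (IH jm hjmi).2.1 (v k) h
          · rw [hu]; simp only [dif_neg hki]
            exact as_of_subset (Set.subset_univ _)
        have := inter_biInter_infinite hXinf _ hYs
        rw [biInter_image_eq] at this
        exact this.mono Set.inter_subset_right
      · push_neg at hw
        have huniv : ⋂ k ∈ Finset.range (m+1), u k = Set.univ := by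
          apply Set.eq_univ_of_forall
          intro x
          simp only [Set.mem_iInter]
          intro k hk
          rw [hu]; simp only [dif_neg (not_lt.2 (hw k hk))]
          trivial
        rw [huniv]
        exact Set.infinite_univ
    obtain ⟨Z, hZinf, hZfin, -⟩ := exists_pseudoInter u hufin
    have hZTB : ∀ j, j < i → (Z \ TB j).Finite := by
      intro j hj
      have hjIic : j ∈ Set.Iic i := le_of_lt hj
      rw [hv] at hjIic
      obtain ⟨k, hk⟩ := hjIic
      have : u k = TB j := by rw [hu]; simp only []; rw [dif_pos (hk ▸ hj : v k < i), hk]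
      rw [← this]
      exact hZfin k
    have hstep : ∀ (a : ℕ), ∃ b ∈ Z, a < b := fun a => hZinf.exists_gt a
    choose f hf1 hf2 using hstep
    set z : ℕ → ℕ := fun n => Nat.rec (f (Fam i 0)) (fun n ih => f (max ih (Fam i (n+1)))) n
      with hz
    have hz0 : z 0 ∈ Z ∧ Fam i 0 < z 0 := ⟨hf1 _, hf2 _⟩
    have hzs : ∀ n, z (n+1) ∈ Z ∧ max (z n) (Fam i (n+1)) < z (n+1) := fun n => ⟨hf1 _, hf2 _⟩
    have hzZ : ∀ n, z n ∈ Z := by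
      intro n; cases n with
      | zero => exact hz0.1
      | succ n => exact (hzs n).1
    have hzmono : StrictMono z := strictMono_nat_of_lt_succ
      (fun n => lt_of_le_of_lt (le_max_left _ _) (hzs n).2)
    have hzF : ∀ n, Fam i n ≤ z n := by
      intro n; cases n with
      | zero => exact hz0.2.le
      | succ n => exact le_trans (le_max_right _ _) (hzs n).2.le
    have hex : ∃ X, GB i (fun j _ => TB j) X := by
      refine ⟨Set.range z, Set.infinite_range_of_injective hzmono.injective, ?_, ?_⟩
      · intro j hj
        refine as_trans (as_of_subset ?_) (hZTB j hj)
        rintro x ⟨n, rfl⟩; exact hzZ n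
      · rintro k ⟨n, rfl⟩
        rw [count_range hzmono]
        exact hzF n
    rw [hTBeq i, dif_pos hex]
    exact hex.choose_spec
  obtain ⟨Y, hYinf, hYTB⟩ := pseudo_of_decreasing hstar TB (fun i => (hGood i).1)
    (fun j i hj => (hGood i).2.1 j hj)
  have hYset : {k | k ∈ Y}.Infinite := hYinf
  set e : ℕ → ℕ := Nat.nth (· ∈ Y) with he
  have hem : ∀ n, e n ∈ Y := fun n => Nat.nth_mem_of_infinite hYset n
  have hemono : StrictMono e := Nat.nth_strictMono hYset
  refine ⟨fun m => e (2*m), fun i => ?_⟩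
  have hfinD : (Y \ TB i).Finite := hYTB i
  refine ⟨max hfinD.toFinset.card (hfinD.toFinset.sup id + 1), fun m hm => ?_⟩
  set t := e (2*m) with ht
  have htY : t ∈ Y := hem _
  have htTB : t ∈ TB i := by
    by_contra hnot
    have hmem : t ∈ hfinD.toFinset := by rw [Set.Finite.mem_toFinset]; exact ⟨htY, hnot⟩
    have h1 : t ≤ hfinD.toFinset.sup id := Finset.le_sup (f := id) hmem
    have h2 : hfinD.toFinset.sup id + 1 ≤ m :=
      le_trans (le_max_right _ _) hm
    have h4 : 2*m ≤ t := by
      calc 2*m ≤ e (2*m) := hemono.le_apply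
        _ = t := rfl
    omega
  have hcount1 : 2*m ≤ Nat.count (· ∈ Y) t := le_count hemono hem (2*m)
  have hcount2 : Nat.count (· ∈ Y) t ≤ Nat.count (· ∈ TB i) t + hfinD.toFinset.card :=
    count_le_count_add hfinD t
  have hcm : m ≤ Nat.count (· ∈ TB i) t := by
    have hcm' : hfinD.toFinset.card ≤ m := le_trans (le_max_left _ _) hm
    omega
  have hQ := (hGood i).2.2 t htTB
  calc fam i m ≤ Fam i m := hle i m
    _ ≤ Fam i (Nat.count (· ∈ TB i) t) := hFmono i hcm
    _ ≤ t := hQ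

theorem biInter_range_inter (m : ℕ) (u : ℕ → Set ℕ) (C : Set ℕ) :
    ⋂ k ∈ Finset.range (m+1), (u k ∩ C) = (⋂ k ∈ Finset.range (m+1), u k) ∩ C := by
  ext x
  simp only [Set.mem_iInter, Set.mem_inter_iff, Finset.mem_range]
  constructor
  · intro h
    exact ⟨fun k hk => (h k hk).1, (h 0 (by omega)).2⟩
  · rintro ⟨h1, h2⟩ k hk
    exact ⟨h1 k hk, h2⟩

theorem no_tower_contra
    (A : II → Set ℕ)
    (hAsfip : ∀ s : Finset II, (⋂ j ∈ s, A j).Infinite)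
    (hAnops : ∀ X : Set ℕ, X.Infinite → (∀ i, AlmostSub X (A i)) → False)
    (hstar : Star) : False := by
  have wfII : WellFounded ((· < ·) : II → II → Prop) := wellFounded_lt
  set GM : ∀ i : II, (∀ j : II, j < i → Set ℕ) → Set ℕ → Prop :=
    fun i prev X => X.Infinite ∧ (∀ j (hj : j < i), AlmostSub X (prev j hj)) ∧
      (∀ j, j ≤ i → AlmostSub X (A j)) ∧
      ∀ s : Finset II, (X ∩ ⋂ j ∈ s, A j).Infinite with hGM
  set TM : II → Set ℕ := WellFounded.fix wfII
    (fun i rec => if h : ∃ X, GM i rec X then h.choose else ∅) with hTM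
  have hTMeq : ∀ i, TM i = if h : ∃ X, GM i (fun j _ => TM j) X then h.choose else ∅ := by
    intro i; conv_lhs => rw [hTM, WellFounded.fix_eq]
  have hGood : ∀ i, GM i (fun j _ => TM j) (TM i) := by
    intro i
    induction i using WellFounded.induction wfII with
    | _ i IH =>
    have hIic : (Set.Iic i).Countable := countable_Iic i
    obtain ⟨v, hv⟩ := hIic.exists_eq_range ⟨i, le_refl i⟩
    have hvmem : ∀ m, v m ≤ i := by
      intro m
      have : v m ∈ Set.Iic i := by rw [hv]; exact ⟨m, rfl⟩
      exact this
    set T' : ℕ → Set ℕ := fun m => if _ : v m < i then TM (v m) else Set.univ with hT'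
    set u : ℕ → Set ℕ := fun m => T' m ∩ A (v m) with hu
    -- all relevant finite intersections are infinite
    have hCinf : ∀ (m : ℕ) (s : Finset II),
        ((⋂ k ∈ Finset.range (m+1), u k) ∩ ⋂ j ∈ s, A j).Infinite := by
      intro m s
      by_cases hw : ∃ k ∈ Finset.range (m+1), v k < i
      · obtain ⟨k0, hk0mem, hk0max⟩ := Finset.exists_max_image
          ((Finset.range (m+1)).filter (fun k => v k < i)) v
          (by obtain ⟨k, hk1, hk2⟩ := hw; exact ⟨k, Finset.mem_filter.2 ⟨hk1, hk2⟩⟩)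
        have hjmi : v k0 < i := (Finset.mem_filter.1 hk0mem).2
        have hX0 : ∀ t : Finset II, ((TM (v k0)) ∩ ⋂ j ∈ t, A j).Infinite :=
          (IH (v k0) hjmi).2.2.2
        have hYs : ∀ Y ∈ (Finset.range (m+1)).image T', AlmostSub (TM (v k0)) Y := by
          intro Y hY
          obtain ⟨k, hk, rfl⟩ := Finset.mem_image.1 hY
          by_cases hki : v k < i
          · rw [hT']; simp only [dif_pos hki]
            have hvk : v k ≤ v k0 := hk0max k (Finset.mem_filter.2 ⟨hk, hki⟩)
            rcases eq_or_lt_of_le hvk with h | h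
            · rw [h]; exact as_refl _
            · exact (IH (v k0) hjmi).2.1 (v k) h
          · rw [hT']; simp only [dif_neg hki]
            exact as_of_subset (Set.subset_univ _)
        set t : Finset II := ((Finset.range (m+1)).image v) ∪ s with ht
        have hbig := inter_biInter_infinite
          (X := TM (v k0) ∩ ⋂ j ∈ t, A j) (hX0 t)
          ((Finset.range (m+1)).image T')
          (fun Y hY => as_mono_left Set.inter_subset_left (hYs Y hY))
        refine hbig.mono ?_
        rintro x ⟨⟨hx0, hxt⟩, hxT⟩
        simp only [Set.mem_iInter, Set.mem_inter_iff] at hxt hxT ⊢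
        have hxA : ∀ j ∈ t, x ∈ A j := hxt
        constructor
        · intro k hk
          rw [hu]
          refine ⟨?_, ?_⟩
          · exact hxT (T' k) (Finset.mem_image_of_mem T' hk)
          · exact hxA (v k) (Finset.mem_union_left _ (Finset.mem_image_of_mem v hk))
        · intro j hj
          exact hxA j (Finset.mem_union_right _ hj)
      · push_neg at hw
        have hTuniv : ∀ k ∈ Finset.range (m+1), T' k = Set.univ := by
          intro k hk
          rw [hT']; simp only [dif_neg (not_lt.2 (hw k hk))]
        have hueq : (⋂ k ∈ Finset.range (m+1), u k) ∩ ⋂ j ∈ s, A j =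
            ⋂ j ∈ ((Finset.range (m+1)).image v) ∪ s, A j := by
          ext x
          simp only [Set.mem_inter_iff, Set.mem_iInter, Finset.mem_union, Finset.mem_image]
          constructor
          · rintro ⟨h1, h2⟩ j hj
            rcases hj with ⟨k, hk, rfl⟩ | hj
            · exact (h1 k hk).2
            · exact h2 j hj
          · intro h
            refine ⟨fun k hk => ?_, fun j hj => h j (Or.inr hj)⟩
            rw [hu]
            refine ⟨?_, h (v k) (Or.inl ⟨k, hk, rfl⟩)⟩
            rw [hTuniv k hk]; trivial
        rw [hueq]
        exact hAsfip _
    -- existence of a good set at stage i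
    have hex : ∃ X, GM i (fun j _ => TM j) X := by
      by_contra hnex
      -- every pseudo-intersection of the chain is "killed"
      have hdag : ∀ X : Set ℕ, X.Infinite → (∀ m, (X \ u m).Finite) →
          ∃ s : Finset II, (X ∩ ⋂ j ∈ s, A j).Finite := by
        intro X hXinf hXu
        by_contra hns
        push_neg at hns
        apply hnex
        refine ⟨X, hXinf, ?_, ?_, fun s => hns s⟩
        · intro j hj
          have hjIic : j ∈ Set.Iic i := le_of_lt hj
          rw [hv] at hjIic
          obtain ⟨k, hk⟩ := hjIic
          have hvki : v k < i := by rw [hk]; exact hj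
          refine Set.Finite.subset (hXu k) (Set.diff_subset_diff_right ?_)
          have h1 : u k ⊆ T' k := Set.inter_subset_left
          have h2 : T' k = TM j := by
            simp only [hT']
            rw [dif_pos hvki, hk]
          rw [h2] at h1
          exact h1
        · intro j hj
          have hjIic : j ∈ Set.Iic i := hj
          rw [hv] at hjIic
          obtain ⟨k, hk⟩ := hjIic
          refine Set.Finite.subset (hXu k) (Set.diff_subset_diff_right ?_)
          have h1 : u k ⊆ A (v k) := Set.inter_subset_right
          rw [hk] at h1
          exact h1
      -- a pseudo-intersection below the chain, inside the A's indexed by s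
      have hWex : ∀ s : Finset II, ∃ Wq : Set ℕ, Wq.Infinite ∧
          (∀ m, (Wq \ (⋂ k ∈ Finset.range (m+1), u k)).Finite) ∧
          Wq ⊆ ⋂ j ∈ s, A j := by
        intro s
        have hfin : ∀ m, (⋂ k ∈ Finset.range (m+1), (u k ∩ ⋂ j ∈ s, A j)).Infinite := by
          intro m
          rw [biInter_range_inter]
          exact hCinf m s
        obtain ⟨Wq, h1, h2, h3⟩ := exists_pseudoInter _ hfin
        refine ⟨Wq, h1, ?_, fun x hx => (h3 hx).2⟩
        intro m
        refine Set.Finite.subset ((h2 m).union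
          (Set.Finite.biUnion (Finset.range (m+1)).finite_toSet (fun k _ => h2 k))) ?_
        intro x hx
        have hx1 : x ∈ Wq := hx.1
        have hx2 : x ∉ ⋂ k ∈ Finset.range (m+1), u k := hx.2
        by_cases hxm : x ∈ u m ∩ ⋂ j ∈ s, A j
        · obtain ⟨k, hk, hxk⟩ : ∃ k, k ∈ Finset.range (m+1) ∧ x ∉ u k := by
            by_contra hall
            push_neg at hall
            exact hx2 (Set.mem_iInter₂.2 hall)
          exact Or.inr (Set.mem_biUnion hk ⟨hx1, fun hc => hxk hc.1⟩)
        · exact Or.inl ⟨hx1, hxm⟩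
      choose W hW1 hW2 hW3 using hWex
      -- the "escape" functions
      set fS : Finset II → ℕ → ℕ := fun s m => ((hW2 s m).toFinset.sup id) with hfS
      have hfSle : ∀ s m k, k ∈ W s → k ∉ (⋂ k ∈ Finset.range (m+1), u k) → k ≤ fS s m := by
        intro s m k hk1 hk2
        exact Finset.le_sup (f := id) ((hW2 s m).mem_toFinset.2 ⟨hk1, hk2⟩)
      -- bound them all at once
      have hmkfin : #(Finset II) = #II := Cardinal.mk_finset_of_infinite II
      obtain ⟨e2⟩ := Cardinal.eq.1 hmkfin
      obtain ⟨g, hg⟩ := bounded hstar (fun i' => fS (e2.symm i'))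
      have hgS : ∀ s : Finset II, ∃ N, ∀ m, N ≤ m → fS s m ≤ g m := by
        intro s
        obtain ⟨N, hN⟩ := hg (e2 s)
        exact ⟨N, fun m hm => by simpa using hN m hm⟩
      -- the diagonal pseudo-intersection
      set Z : Set ℕ := {k | ∀ m, k ∈ (⋂ k' ∈ Finset.range (m+1), u k') ∨ k ≤ g m} with hZ
      have hZu : ∀ m, (Z \ u m).Finite := by
        intro m
        refine Set.Finite.subset (Set.finite_Iic (g m)) ?_
        rintro k ⟨hk1, hk2⟩
        rcases hk1 m with h | h
        · exact absurd ((Set.mem_iInter₂.1 h) m (Finset.self_mem_range_succ m)) hk2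
        · exact h
      have hWZ : ∀ s, (W s \ Z).Finite := by
        intro s
        obtain ⟨N, hN⟩ := hgS s
        refine Set.Finite.subset
          (Set.Finite.biUnion (Finset.range N).finite_toSet
            (fun m _ => hW2 s m)) ?_
        rintro k ⟨hk1, hk2⟩
        simp only [hZ, Set.mem_setOf_eq, not_forall] at hk2
        obtain ⟨m, hm⟩ := hk2
        push_neg at hm
        have hkfs : k ≤ fS s m := hfSle s m k hk1 hm.1
        have hmN : m < N := by
          by_contra hge
          push_neg at hge
          have := hN m hge
          omega
        exact Set.mem_biUnion (Finset.mem_range.2 hmN) ⟨hk1, hm.1⟩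
      have hZinf : Z.Infinite := by
        refine (((hW1 ∅).diff (hWZ ∅)).mono ?_)
        rintro k ⟨hk1, hk2⟩
        by_contra hkZ
        exact hk2 ⟨hk1, hkZ⟩
      obtain ⟨s, hs⟩ := hdag Z hZinf hZu
      have : (Z ∩ ⋂ j ∈ s, A j).Infinite := by
        refine (((hW1 s).diff (hWZ s)).mono ?_)
        rintro k ⟨hk1, hk2⟩
        have hkZ : k ∈ Z := by
          by_contra hkZ
          exact hk2 ⟨hk1, hkZ⟩
        exact ⟨hkZ, hW3 s hk1⟩
      exact this hs
    rw [hTMeq i, dif_pos hex]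
    exact hex.choose_spec
  -- final: the chain gives a pseudo-intersection of the A's
  obtain ⟨Y, hYinf, hYTM⟩ := pseudo_of_decreasing hstar TM (fun i => (hGood i).1)
    (fun j i hj => (hGood i).2.1 j hj)
  exact hAnops Y hYinf (fun i => as_trans (hYTM i) ((hGood i).2.2.1 i (le_refl i)))

theorem tower_hasSFIP {T : Set (Set ℕ)} (hT : IsTower T) : HasSFIP T := by
  classical
  have htot : ∀ A, A ∈ T → ∀ B, B ∈ T → AlmostSub A B ∨ AlmostSub B A := by
    intro A hA B hB
    rcases (@trichotomous _ _ hT.2.1.toTrichotomous ⟨A, hA⟩ ⟨B, hB⟩) with h | h | h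
    · exact Or.inr h.1
    · left
      have : A = B := congrArg Subtype.val h
      rw [this]; exact as_refl _
    · exact Or.inl h.1
  intro G hG hGne
  have hmin : ∀ (G : Finset (Set ℕ)), ↑G ⊆ T → G.Nonempty →
      ∃ A ∈ G, ∀ B ∈ G, AlmostSub A B := by
    intro G
    induction G using Finset.induction_on with
    | empty => intro _ h; exact absurd h (by simp)
    | insert _ _ hBG IH =>
      rename_i B G
      intro hsub _
      have hBT : B ∈ T := hsub (Finset.mem_insert_self B G)
      rcases G.eq_empty_or_nonempty with rfl | hGne'
      · refine ⟨B, Finset.mem_insert_self B _, ?_⟩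
        intro C hC
        rcases Finset.mem_insert.1 hC with rfl | hC
        · exact as_refl _
        · exact absurd hC (by simp)
      · have hsub' : ↑G ⊆ T := fun C hC => hsub (Finset.mem_insert_of_mem hC)
        obtain ⟨A, hAG, hAmin⟩ := IH hsub' hGne'
        have hAT : A ∈ T := hsub' hAG
        rcases htot A hAT B hBT with h | h
        · refine ⟨A, Finset.mem_insert_of_mem hAG, ?_⟩
          intro C hC
          rcases Finset.mem_insert.1 hC with rfl | hC
          · exact h
          · exact hAmin C hC
        · refine ⟨B, Finset.mem_insert_self B _, ?_⟩
          intro C hC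
          rcases Finset.mem_insert.1 hC with rfl | hC
          · exact as_refl _
          · exact as_trans h (hAmin C hC)
  obtain ⟨A, hAG, hAmin⟩ := hmin G hG hGne
  have hAinf : A.Infinite := hT.1 A (hG hAG)
  exact (inter_biInter_infinite hAinf G hAmin).mono Set.inter_subset_right

end Roth

/-- (Rothberger) If `𝔭 = ℵ₁` then `𝔭 = 𝔱`. -/
theorem pNum_eq_tNum_of_pNum_eq_aleph1 (h : pNum = aleph 1) : pNum = tNum := by
  classical
  have hSne : {c : Cardinal | ∃ F : Set (Set ℕ),
      (∀ A ∈ F, A.Infinite) ∧ HasSFIP F ∧ ¬ HasPseudoInter F ∧ #↥F = c}.Nonempty := by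
    by_contra hne
    rw [Set.not_nonempty_iff_eq_empty] at hne
    rw [pNum, hne, Cardinal.sInf_empty] at h
    exact absurd h (ne_of_lt (lt_of_le_of_lt zero_le aleph0_lt_aleph_one))
  have hmem := csInf_mem hSne
  obtain ⟨F₀, hFinf, hFsfip, hFnops, hFcard⟩ := hmem
  have hFc1 : #↥F₀ = aleph 1 := by rw [hFcard, ← pNum, h]
  have hcard : #↥F₀ = #Roth.II := by rw [hFc1, Roth.mkII]
  obtain ⟨eqv⟩ := Cardinal.eq.1 hcard
  set A : Roth.II → Set ℕ := fun i => ((eqv.symm i : ↥F₀) : Set ℕ) with hA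
  have hAmem : ∀ i, A i ∈ F₀ := fun i => (eqv.symm i).2
  have hAsur : ∀ B ∈ F₀, ∃ i, A i = B := by
    intro B hB
    refine ⟨eqv ⟨B, hB⟩, ?_⟩
    rw [hA]; simp
  have hAsfip : ∀ s : Finset Roth.II, (⋂ j ∈ s, A j).Infinite := by
    intro s
    rcases s.eq_empty_or_nonempty with rfl | hne
    · have : ⋂ j ∈ (∅ : Finset Roth.II), A j = Set.univ := by ext x; simp
      rw [this]; exact Set.infinite_univ
    · have hGsub : ↑(s.image A) ⊆ F₀ := by
        intro B hB
        simp only [Finset.coe_image, Set.mem_image, Finset.mem_coe] at hB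
        obtain ⟨j, _, rfl⟩ := hB
        exact hAmem j
      have := hFsfip (s.image A) hGsub (hne.image A)
      rwa [Roth.biInter_image_eq] at this
  have hAnops : ∀ X : Set ℕ, X.Infinite → (∀ i, AlmostSub X (A i)) → False := by
    intro X hX hsub
    refine hFnops ⟨X, hX, ?_⟩
    intro B hB
    obtain ⟨i, rfl⟩ := hAsur B hB
    exact hsub i
  have htower : ∃ T : Set (Set ℕ), IsTower T ∧ #↥T = aleph 1 := by
    by_contra hNT
    exact Roth.no_tower_contra A hAsfip hAnops (Roth.star_of_noTower hNT)
  obtain ⟨T₁, hT₁, hT₁c⟩ := htower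
  have htmem : aleph 1 ∈ {c : Cardinal | ∃ T : Set (Set ℕ), IsTower T ∧ #↥T = c} :=
    ⟨T₁, hT₁, hT₁c⟩
  have h1 : tNum ≤ aleph 1 := csInf_le' htmem
  have hTne : {c : Cardinal | ∃ T : Set (Set ℕ), IsTower T ∧ #↥T = c}.Nonempty :=
    ⟨aleph 1, htmem⟩
  obtain ⟨T₀, hT₀, hT₀c⟩ := csInf_mem hTne
  have h2 : pNum ≤ tNum := csInf_le' ⟨T₀, hT₀.1, Roth.tower_hasSFIP hT₀, hT₀.2.2, hT₀c⟩
  have h1' : tNum ≤ pNum := by rw [h]; exact h1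
  exact le_antisymm h2 h1'
end

section
/- If D is an ℵ₁-incomplete λ⁺-good ultrafilter on a set I, then D is λ-regular. -/
open Cardinal

universe u v

/-- `f'` is a multiplicative refinement of `f : [λ]^{<ℵ₀} → D`, where finite
subsets of `λ` are represented as finite subsets of the ordinals `< λ` (i.e. of
`Set.Iio λ.ord`). -/
def HasMultRefinement {I : Type v} (D : Filter I) (lam : Cardinal.{u})
    (f : Set Ordinal.{u} → Set I) : Prop :=
  ∃ f' : Set Ordinal.{u} → Set I,
    (∀ s : Set Ordinal.{u}, s.Finite → s ⊆ Set.Iio lam.ord → f' s ∈ D ∧ f' s ⊆ f s) ∧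
    (∀ s t : Set Ordinal.{u}, s.Finite → s ⊆ Set.Iio lam.ord →
      t.Finite → t ⊆ Set.Iio lam.ord → f' s ∩ f' t = f' (s ∪ t))

/-- `D` is `λ⁺`-good: every `f : [λ]^{<ℵ₀} → D` has a multiplicative refinement. -/
def IsGoodPlus {I : Type v} (D : Filter I) (lam : Cardinal.{u}) : Prop :=
  ∀ f : Set Ordinal.{u} → Set I,
    (∀ s : Set Ordinal.{u}, s.Finite → s ⊆ Set.Iio lam.ord → f s ∈ D) →
    HasMultRefinement D lam f

/-- If `D` is an `ℵ₁`-incomplete `λ⁺`-good ultrafilter on `I`, then `D` is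
`λ`-regular. -/
theorem regular_of_incomplete_good {I : Type v} (D : Ultrafilter I) (lam : Cardinal.{u})
    (hinc : ∃ Y : ℕ → Set I, (∀ n, Y n ∈ D) ∧ (⋂ n, Y n) = ∅)
    (hgood : IsGoodPlus (D : Filter I) lam) :
    ∃ X : ↥(Set.Iio lam.ord) → Set I,
      (∀ α, X α ∈ D) ∧ ∀ t : I, {α | t ∈ X α}.Finite := by
  obtain ⟨Y, hY, hYempty⟩ := hinc
  set Z : ℕ → Set I := fun n => ⋂ k ∈ Set.Iic n, Y k with hZ
  have hZmem : ∀ n, Z n ∈ D := fun n =>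
    (Filter.biInter_mem (Set.finite_Iic n)).2 fun k _ => hY k
  set f : Set Ordinal.{u} → Set I := fun s => Z s.ncard with hf
  have hfmem : ∀ s : Set Ordinal.{u}, s.Finite → s ⊆ Set.Iio lam.ord → f s ∈ D :=
    fun s _ _ => hZmem _
  obtain ⟨f', h1, h2⟩ := hgood f hfmem
  refine ⟨fun α => f' {(α : Ordinal)}, ?_, ?_⟩
  · intro α
    exact (h1 {(α : Ordinal)} (Set.finite_singleton _)
      (Set.singleton_subset_iff.2 α.2)).1
  · intro t
    by_contra hS
    replace hS : {α : ↥(Set.Iio lam.ord) | t ∈ f' {(α : Ordinal)}}.Infinite := hS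
    have hne : t ∉ ⋂ n, Y n := by rw [hYempty]; exact Set.notMem_empty t
    rw [Set.mem_iInter] at hne
    push_neg at hne
    obtain ⟨n, hn⟩ := hne
    obtain ⟨u', hu'S, hu'card⟩ := hS.exists_subset_card_eq (n + 1)
    set v : Finset Ordinal.{u} := u'.image Subtype.val with hv
    have hvcard : v.card = n + 1 := by
      rw [hv, Finset.card_image_of_injective _ Subtype.val_injective, hu'card]
    have hvsub : (↑v : Set Ordinal.{u}) ⊆ Set.Iio lam.ord := by
      intro a ha
      simp only [hv, Finset.coe_image, Set.mem_image, Finset.mem_coe] at ha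
      obtain ⟨x, _, rfl⟩ := ha
      exact x.2
    have hvmem : ∀ a ∈ v, t ∈ f' {a} := by
      intro a ha
      simp only [hv, Finset.mem_image] at ha
      obtain ⟨x, hx, rfl⟩ := ha
      exact hu'S hx
    -- key induction: t ∈ f' ↑w for nonempty w ⊆ v
    have key : ∀ w : Finset Ordinal.{u}, (↑w : Set Ordinal.{u}) ⊆ Set.Iio lam.ord →
        (∀ a ∈ w, t ∈ f' {a}) → w.Nonempty → t ∈ f' ↑w := by
      intro w
      induction w using Finset.induction_on with
      | empty => intro _ _ h; exact absurd h (by simp)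
      | insert a w hni ih =>
        intro hsub hmem _
        rcases w.eq_empty_or_nonempty with rfl | hwne
        · simpa using hmem a (by simp)
        · have hsa : ({a} : Set Ordinal.{u}) ⊆ Set.Iio lam.ord := by
            intro x hx
            rw [Set.mem_singleton_iff] at hx
            exact hsub (by simp [hx])
          have hsw : (↑w : Set Ordinal.{u}) ⊆ Set.Iio lam.ord :=
            fun x hx => hsub (by simp [Finset.mem_coe.1 hx])
          have htw : t ∈ f' ↑w := ih hsw (fun b hb => hmem b (Finset.mem_insert_of_mem hb)) hwne
          have hta : t ∈ f' {a} := hmem a (Finset.mem_insert_self a w)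
          have := h2 {a} ↑w (Set.finite_singleton _) hsa w.finite_toSet hsw
          have ht : t ∈ f' ({a} ∪ ↑w) := by
            rw [← this]; exact ⟨hta, htw⟩
          have hco : ({a} ∪ ↑w : Set Ordinal.{u}) = ↑(insert a w) := by
            rw [Finset.coe_insert, Set.insert_eq]
          rwa [hco] at ht
    have hvne : v.Nonempty := Finset.card_pos.1 (by omega)
    have htv : t ∈ f' ↑v := key v hvsub hvmem hvne
    have htfv : t ∈ f ↑v := (h1 ↑v v.finite_toSet hvsub).2 htv
    have hcard : (↑v : Set Ordinal.{u}).ncard = n + 1 := by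
      rw [Set.ncard_coe_finset, hvcard]
    rw [hf] at htfv
    simp only [hcard] at htfv
    have : t ∈ Y n := by
      exact Set.mem_iInter₂.1 htfv n (by simp)
    exact hn this
end
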